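/- arXiv:1507.02496 — 5 statements merged into one kernel-verified Lean document; each statement's English description precedes it below -/
import Mathlib

section
/- Let I be a σ-ideal on ℝ containing all singletons, with Borel base and translation invariant, and let P ⊆ [ℝ]^{<ω} be a partition of ℝ into finite sets. Then there exists a subfamily A₀ ⊆ P such that ⋃A₀ is completely I-nonmeasurable. -/
/-- A (proper) σ-ideal of subsets of ℝ. -/
def SigmaIdeal (I : Set (Set ℝ)) : Prop :=
  ∅ ∈ I ∧ Set.univ ∉ I ∧ (∀ A B : Set ℝ, A ⊆ B → B ∈ I → A ∈ I) ∧
    ∀ f : ℕ → Set ℝ, (∀ n, f n ∈ I) → (⋃ n, f n) ∈ I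

/-- The ideal contains all singletons. -/
def ContainsSingletons (I : Set (Set ℝ)) : Prop := ∀ x : ℝ, {x} ∈ I

/-- The ideal has a Borel base. -/
def BorelBase (I : Set (Set ℝ)) : Prop :=
  ∀ A ∈ I, ∃ B ∈ I, MeasurableSet B ∧ A ⊆ B

/-- The ideal is translation invariant. -/
def TranslationInvariant (I : Set (Set ℝ)) : Prop :=
  ∀ A ∈ I, ∀ x : ℝ, (fun y => x + y) '' A ∈ I

/-- The σ-algebra Bor[I] generated by the Borel sets together with I. -/
def BorI (I : Set (Set ℝ)) : MeasurableSpace ℝ :=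
  MeasurableSpace.generateFrom {s : Set ℝ | MeasurableSet s ∨ s ∈ I}

/-- A set is I-nonmeasurable if it is not in Bor[I]. -/
def INonmeasurable (I : Set (Set ℝ)) (A : Set ℝ) : Prop :=
  ¬ @MeasurableSet ℝ (BorI I) A

/-- A set is completely I-nonmeasurable if its intersection with every
I-positive Borel set is I-nonmeasurable. -/
def CompletelyINonmeasurable (I : Set (Set ℝ)) (A : Set ℝ) : Prop :=
  ∀ B : Set ℝ, MeasurableSet B → B ∉ I → INonmeasurable I (A ∩ B)

/-- A partition of ℝ. -/
def IsPartitionOfReals (P : Set (Set ℝ)) : Prop :=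
  (∀ p ∈ P, p ≠ ∅) ∧ ⋃₀ P = Set.univ ∧
    ∀ p ∈ P, ∀ q ∈ P, p ≠ q → p ∩ q = ∅

/-- The σ-ideal of countable subsets of ℝ. -/
def ctblIdeal : Set (Set ℝ) := {A : Set ℝ | A.Countable}

/-- A Bernstein set: it and its complement meet every nonempty perfect set. -/
def BernsteinSet (A : Set ℝ) : Prop :=
  ∀ P : Set ℝ, Perfect P → P.Nonempty → (P ∩ A).Nonempty ∧ (P ∩ Aᶜ).Nonempty

open Set Cardinal

section Helpers

variable {I : Set (Set ℝ)}

lemma helper_countable_mem (hI : SigmaIdeal I) (hsing : ContainsSingletons I)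
    {B : Set ℝ} (hB : B.Countable) : B ∈ I := by
  rcases B.eq_empty_or_nonempty with rfl | hne
  · exact hI.1
  · obtain ⟨f, rfl⟩ := hB.exists_eq_range hne
    have : range f = ⋃ n, {f n} := by ext x; simp [eq_comm]
    rw [this]
    exact hI.2.2.2 _ fun n => hsing (f n)

lemma helper_union_mem (hI : SigmaIdeal I) {X Y : Set ℝ} (hX : X ∈ I) (hY : Y ∈ I) :
    X ∪ Y ∈ I := by
  have : X ∪ Y = ⋃ n : ℕ, if n = 0 then X else Y := by
    ext x
    simp only [mem_union, mem_iUnion]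
    constructor
    · rintro (h | h)
      · exact ⟨0, by simp [h]⟩
      · exact ⟨1, by simp [h]⟩
    · rintro ⟨n, hn⟩
      by_cases h : n = 0 <;> simp [h] at hn <;> tauto
  rw [this]
  exact hI.2.2.2 _ fun n => by by_cases h : n = 0 <;> simp [h, hX, hY]

/-- Every set in `Bor[I]` differs from a Borel set by a set in `I`. -/
lemma helper_borI_approx (hI : SigmaIdeal I) {S : Set ℝ}
    (h : @MeasurableSet ℝ (BorI I) S) :
    ∃ B' : Set ℝ, MeasurableSet B' ∧ (S \ B') ∪ (B' \ S) ∈ I := by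
  have h' : MeasurableSpace.GenerateMeasurable {s : Set ℝ | MeasurableSet s ∨ s ∈ I} S := h
  clear h
  induction h' with
  | basic u hu =>
    rcases hu with hu | hu
    · exact ⟨u, hu, by simpa using hI.1⟩
    · exact ⟨∅, MeasurableSet.empty, by simpa using hu⟩
  | empty => exact ⟨∅, MeasurableSet.empty, by simpa using hI.1⟩
  | compl t ht ih =>
    obtain ⟨B', hB', hN⟩ := ih
    refine ⟨B'ᶜ, hB'.compl, ?_⟩
    have : tᶜ \ B'ᶜ ∪ B'ᶜ \ tᶜ = t \ B' ∪ B' \ t := by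
      ext x; simp only [mem_union, mem_diff, mem_compl_iff]; tauto
    rw [this]; exact hN
  | iUnion f hf ih =>
    choose B hB hN using ih
    refine ⟨⋃ n, B n, MeasurableSet.iUnion hB, ?_⟩
    refine hI.2.2.1 _ (⋃ n, (f n \ B n ∪ B n \ f n)) ?_ (hI.2.2.2 _ hN)
    intro x hx
    rcases hx with hx | hx
    · obtain ⟨hx1, hx2⟩ := hx
      obtain ⟨n, hn⟩ := mem_iUnion.1 hx1
      exact mem_iUnion.2 ⟨n, Or.inl ⟨hn, fun h => hx2 (mem_iUnion.2 ⟨n, h⟩)⟩⟩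
    · obtain ⟨hx1, hx2⟩ := hx
      obtain ⟨n, hn⟩ := mem_iUnion.1 hx1
      exact mem_iUnion.2 ⟨n, Or.inr ⟨hn, fun h => hx2 (mem_iUnion.2 ⟨n, h⟩)⟩⟩

/-- If both `A` and `Aᶜ` meet every `I`-positive Borel set, then `A` is completely
`I`-nonmeasurable. -/
lemma helper_witness (hI : SigmaIdeal I) (hbase : BorelBase I) (A : Set ℝ)
    (hmeets : ∀ D : Set ℝ, MeasurableSet D → D ∉ I → (D ∩ A).Nonempty ∧ (D ∩ Aᶜ).Nonempty) :
    CompletelyINonmeasurable I A := by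
  intro B hB hBI hmeas
  obtain ⟨B', hB'meas, hN⟩ := helper_borI_approx hI hmeas
  obtain ⟨N', hN'I, hN'meas, hNN'⟩ := hbase _ hN
  by_cases hB'I : B' ∈ I
  · -- A ∩ B ⊆ B' ∪ N', so B \ (B' ∪ N') avoids A
    have hM : B' ∪ N' ∈ I := helper_union_mem hI hB'I hN'I
    have hD : MeasurableSet (B \ (B' ∪ N')) := hB.diff (hB'meas.union hN'meas)
    have hDI : B \ (B' ∪ N') ∉ I := by
      intro hmem
      exact hBI (hI.2.2.1 B _ (fun x hx => by
        by_cases h : x ∈ B' ∪ N'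
        · exact Or.inr h
        · exact Or.inl ⟨hx, h⟩) (helper_union_mem hI hmem hM))
    obtain ⟨⟨x, hx1, hx2⟩, -⟩ := hmeets _ hD hDI
    -- x ∈ B \ (B' ∪ N') and x ∈ A, so x ∈ A ∩ B; then x ∈ B' or x ∈ (A∩B) \ B' ⊆ N'
    have hxAB : x ∈ A ∩ B := ⟨hx2, hx1.1⟩
    by_cases h : x ∈ B'
    · exact hx1.2 (Or.inl h)
    · exact hx1.2 (Or.inr (hNN' (Or.inl ⟨hxAB, h⟩)))
  · -- B' \ N' ⊆ A
    have hD : MeasurableSet (B' \ N') := hB'meas.diff hN'meas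
    have hDI : B' \ N' ∉ I := by
      intro hmem
      exact hB'I (hI.2.2.1 B' _ (fun x hx => by
        by_cases h : x ∈ N'
        · exact Or.inr h
        · exact Or.inl ⟨hx, h⟩) (helper_union_mem hI hmem hN'I))
    obtain ⟨-, ⟨x, hx1, hx2⟩⟩ := hmeets _ hD hDI
    -- x ∈ B' \ N' so x ∉ N ⊇ B' \ (A ∩ B), hence x ∈ A ∩ B, contradicting x ∈ Aᶜ
    have : x ∈ A ∩ B := by
      by_contra h
      exact hx1.2 (hNN' (Or.inr ⟨hx1.1, h⟩))
    exact hx2 this.1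

lemma helper_card_borel : #{B : Set ℝ | MeasurableSet B} ≤ 𝔠 := by
  have h1 : (inferInstance : MeasurableSpace ℝ)
      = MeasurableSpace.generateFrom (range (Iio : ℝ → Set ℝ)) := by
    rw [BorelSpace.measurable_eq (α := ℝ), borel_eq_generateFrom_Iio]
  have h2 : {B : Set ℝ | MeasurableSet B}
      = {B : Set ℝ | @MeasurableSet ℝ (MeasurableSpace.generateFrom (range Iio)) B} := by
    rw [← h1]
  rw [h2]
  exact MeasurableSpace.cardinal_measurableSet_le_continuum
    (mk_range_le.trans (by rw [Cardinal.mk_real]))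

lemma helper_card_pos_borel (hI : SigmaIdeal I) (hsing : ContainsSingletons I)
    {B : Set ℝ} (hB : MeasurableSet B) (hBI : B ∉ I) : #B = 𝔠 := by
  have hunc : ¬ B.Countable := fun h => hBI (helper_countable_mem hI hsing h)
  haveI := hB.standardBorel
  have hnc : ¬ Countable ↥B := by rwa [Set.countable_coe_iff]
  have e := PolishSpace.measurableEquivNatBoolOfNotCountable hnc
  have : #B = #(ℕ → Bool) := Cardinal.mk_congr e.toEquiv
  rw [this, Cardinal.mk_arrow]
  simp [Cardinal.two_power_aleph0]

lemma helper_small_union {ι : Type} (hι : #ι < 𝔠) (g : ι → Set ℝ)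
    (hg : ∀ i, (g i).Countable) : #(⋃ i, g i) < 𝔠 := by
  calc #(⋃ i, g i) ≤ Cardinal.sum fun i => #(g i) := Cardinal.mk_iUnion_le_sum_mk
    _ ≤ Cardinal.sum fun _ : ι => ℵ₀ := Cardinal.sum_le_sum _ _
        (fun i => Cardinal.mk_le_aleph0_iff.2 ((hg i).to_subtype))
    _ = #ι * ℵ₀ := Cardinal.sum_const' ι ℵ₀
    _ < 𝔠 := Cardinal.mul_lt_of_lt Cardinal.aleph0_le_continuum hι
        Cardinal.aleph0_lt_continuum

lemma helper_not_small {C T : Set ℝ} (hC : #C = 𝔠) (hT : #T < 𝔠) : (C \ T).Nonempty := by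
  rw [Set.nonempty_iff_ne_empty]
  intro h
  have hsub : C ⊆ T := by
    intro x hx
    by_contra hxT
    exact absurd h (Set.nonempty_iff_ne_empty.1 ⟨x, hx, hxT⟩)
  exact absurd ((Cardinal.mk_le_mk_of_subset hsub).trans_lt hT) (by rw [hC]; exact lt_irrefl _)

end Helpers

theorem partition_into_finite_sets_completely_nonmeasurable_union
    (I : Set (Set ℝ)) (hI : SigmaIdeal I) (hsing : ContainsSingletons I)
    (hbase : BorelBase I) (htrans : TranslationInvariant I)
    (P : Set (Set ℝ)) (hfin : ∀ p ∈ P, p.Finite) (hP : IsPartitionOfReals P) :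
    ∃ A₀ ⊆ P, CompletelyINonmeasurable I (⋃₀ A₀) := by
  classical
  obtain ⟨hne, hcov, hdisj⟩ := hP
  -- the piece of the partition containing a point
  have hpieceEx : ∀ x : ℝ, ∃ p, p ∈ P ∧ x ∈ p := by
    intro x
    have : x ∈ ⋃₀ P := by rw [hcov]; trivial
    obtain ⟨p, hp, hxp⟩ := this
    exact ⟨p, hp, hxp⟩
  choose piece hpieceP hpiecemem using hpieceEx
  have piece_unique : ∀ {x : ℝ} {p : Set ℝ}, p ∈ P → x ∈ p → p = piece x := by
    intro x p hp hxp
    by_contra h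
    have := hdisj p hp (piece x) (hpieceP x) h
    exact absurd (Set.mem_inter hxp (hpiecemem x)) (by rw [this]; exact notMem_empty x)
  have mem_piece_iff : ∀ x y : ℝ, x ∈ piece y ↔ piece x = piece y := by
    intro x y
    constructor
    · intro h; exact (piece_unique (hpieceP y) h).symm
    · intro h; rw [← h]; exact hpiecemem x
  have piece_ctble : ∀ x : ℝ, (piece x).Countable :=
    fun x => (hfin _ (hpieceP x)).countable
  -- index type of I-positive Borel sets
  set ιB := {B : Set ℝ // MeasurableSet B ∧ B ∉ I} with hιB
  have hιcard : #ιB ≤ 𝔠 := by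
    refine le_trans ?_ helper_card_borel
    exact Cardinal.mk_subtype_le_of_subset (fun B hB => hB.1)
  haveI : Nonempty ιB := ⟨⟨Set.univ, MeasurableSet.univ, hI.2.1⟩⟩
  -- well ordered index of length continuum
  set W := (𝔠 : Cardinal).ord.ToType with hW
  have hWcard : #W = 𝔠 := Cardinal.mk_ord_toType 𝔠
  obtain ⟨emb⟩ : Nonempty (ιB ↪ W) := (Cardinal.le_def ιB W).1 (hιcard.trans_eq hWcard.symm)
  set e : W → ιB := Function.invFun emb with he
  have hesurj : Function.Surjective e := Function.invFun_surjective emb.injective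
  have hcard : ∀ i : W, #((e i).1) = 𝔠 :=
    fun i => helper_card_pos_borel hI hsing (e i).2.1 (e i).2.2
  -- the recursion step
  have step : ∀ (i : W) (p : ∀ j, j < i → ℝ × ℝ), ∃ z : ℝ × ℝ,
      z.1 ∈ (e i).1 ∧ z.2 ∈ (e i).1 ∧
      (∀ j (h : j < i), z.1 ∉ piece ((p j h).2)) ∧
      (∀ j (h : j < i), z.2 ∉ piece ((p j h).1)) ∧ z.2 ∉ piece z.1 := by
    intro i p
    have hIio : #(Iio i) < 𝔠 := Cardinal.mk_Iio_ord_toType i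
    set T1 : Set ℝ := ⋃ j : Iio i, piece ((p j.1 j.2).2) with hT1
    have hT1c : #T1 < 𝔠 := helper_small_union hIio _ (fun j => piece_ctble _)
    obtain ⟨z1, hz1C, hz1T⟩ := helper_not_small (hcard i) hT1c
    set T2 : Set ℝ := (⋃ j : Iio i, piece ((p j.1 j.2).1)) ∪ piece z1 with hT2
    have hT2c : #T2 < 𝔠 := by
      refine lt_of_le_of_lt (Cardinal.mk_union_le _ _) ?_
      exact Cardinal.add_lt_of_lt Cardinal.aleph0_le_continuum
        (helper_small_union hIio _ (fun j => piece_ctble _))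
        ((Cardinal.mk_le_aleph0_iff.2 (piece_ctble z1).to_subtype).trans_lt
          Cardinal.aleph0_lt_continuum)
    obtain ⟨z2, hz2C, hz2T⟩ := helper_not_small (hcard i) hT2c
    refine ⟨(z1, z2), hz1C, hz2C, ?_, ?_, ?_⟩
    · intro j h hmem
      exact hz1T (Set.mem_iUnion.2 ⟨⟨j, h⟩, hmem⟩)
    · intro j h hmem
      exact hz2T (Or.inl (Set.mem_iUnion.2 ⟨⟨j, h⟩, hmem⟩))
    · intro hmem
      exact hz2T (Or.inr hmem)
  -- the transfinite recursion
  have wf : WellFounded ((· < ·) : W → W → Prop) := IsWellFounded.wf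
  obtain ⟨F, hF⟩ : ∃ F : W → ℝ × ℝ,
      ∀ i, F i = Classical.choose (step i (fun j _ => F j)) :=
    ⟨wf.fix (fun i p => Classical.choose (step i p)), fun i => wf.fix_eq _ i⟩
  have spec : ∀ i : W, (F i).1 ∈ (e i).1 ∧ (F i).2 ∈ (e i).1 ∧
      (∀ j, j < i → (F i).1 ∉ piece ((F j).2)) ∧
      (∀ j, j < i → (F i).2 ∉ piece ((F j).1)) ∧ (F i).2 ∉ piece (F i).1 := by
    intro i
    have := Classical.choose_spec (step i (fun j _ => F j))
    rw [hF i]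
    exact ⟨this.1, this.2.1, fun j h => this.2.2.1 j h, fun j h => this.2.2.2.1 j h,
      this.2.2.2.2⟩
  have cross : ∀ i j : W, (F i).2 ∉ piece ((F j).1) := by
    intro i j
    rcases lt_trichotomy j i with h | h | h
    · exact (spec i).2.2.2.1 j h
    · rw [h]; exact (spec i).2.2.2.2
    · intro hmem
      refine (spec j).2.2.1 i h ?_
      rw [mem_piece_iff] at hmem ⊢
      exact hmem.symm
  -- the subfamily
  refine ⟨{p ∈ P | ∃ i : W, (F i).1 ∈ p}, fun p hp => hp.1, ?_⟩
  refine helper_witness hI hbase _ ?_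
  intro D hD hDI
  obtain ⟨i, hi⟩ := hesurj ⟨D, hD, hDI⟩
  have hieq : (e i).1 = D := by rw [hi]
  constructor
  · refine ⟨(F i).1, by rw [← hieq]; exact (spec i).1, ?_⟩
    exact ⟨piece ((F i).1), ⟨hpieceP _, ⟨i, hpiecemem _⟩⟩, hpiecemem _⟩
  · refine ⟨(F i).2, by rw [← hieq]; exact (spec i).2.1, ?_⟩
    intro hmem
    obtain ⟨p, ⟨hpP, j, hj⟩, hxp⟩ := hmem
    have hpe : p = piece ((F i).2) := piece_unique hpP hxp
    rw [hpe] at hj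
    have heq : piece ((F j).1) = piece ((F i).2) := (mem_piece_iff _ _).1 hj
    exact cross i j (by rw [heq]; exact hpiecemem _)
end

section
/- Let I be a σ-ideal on ℝ containing all singletons, with Borel base and translation invariant, and let P ⊆ [ℝ]^{<ω} be a partition of ℝ into finite sets. Then there exists a subfamily A₁ ⊆ P such that ⋃A₁ is I-nonmeasurable but not completely I-nonmeasurable. -/
open Cardinal Set MeasureTheory

section AuxLemmas
variable {I : Set (Set ℝ)}

variable {I : Set (Set ℝ)}

lemma ideal_union (hI : SigmaIdeal I) {A B : Set ℝ} (hA : A ∈ I) (hB : B ∈ I) :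
    A ∪ B ∈ I := by
  have hsub : A ∪ B ⊆ ⋃ n : ℕ, (if n = 0 then A else B) := by
    intro x hx
    rcases hx with hx | hx
    · exact Set.mem_iUnion.mpr ⟨0, by simpa⟩
    · exact Set.mem_iUnion.mpr ⟨1, by simpa⟩
  exact hI.2.2.1 _ _ hsub (hI.2.2.2 _ fun n => by by_cases h : n = 0 <;> simp [h, hA, hB])

lemma ctbl_mem (hI : SigmaIdeal I) (hsing : ContainsSingletons I) {A : Set ℝ}
    (hA : A.Countable) : A ∈ I := by
  rcases A.eq_empty_or_nonempty with rfl | hne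
  · exact hI.1
  obtain ⟨f, hf⟩ := hA.exists_eq_range hne
  have : A = ⋃ n, {f n} := by simpa [Set.range] using hf
  rw [this]
  exact hI.2.2.2 _ fun n => hsing (f n)

lemma Ico_notMem_ideal (hI : SigmaIdeal I) (htrans : TranslationInvariant I) (m : ℤ) :
    Set.Ico (m : ℝ) (m + 1) ∉ I := by
  intro hm
  have hall : ∀ k : ℤ, Set.Ico (k : ℝ) (k + 1) ∈ I := by
    intro k
    have h := htrans _ hm ((k : ℝ) - m)
    have himg : (fun y => ((k : ℝ) - m) + y) '' Set.Ico (m : ℝ) (m + 1)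
        = Set.Ico (k : ℝ) (k + 1) := by
      rw [Set.image_const_add_Ico]
      congr 1 <;> ring
    rwa [himg] at h
  obtain ⟨e, he⟩ := exists_surjective_nat ℤ
  have hUniv : Set.univ ∈ I := by
    have hsub : Set.univ ⊆ ⋃ n : ℕ, Set.Ico ((e n : ℤ) : ℝ) ((e n : ℤ) + 1) := by
      intro x _
      obtain ⟨n, hn⟩ := he ⌊x⌋
      refine Set.mem_iUnion.mpr ⟨n, ?_⟩
      rw [hn]
      exact ⟨Int.floor_le x, Int.lt_floor_add_one x⟩
    exact hI.2.2.1 _ _ hsub (hI.2.2.2 _ fun n => hall (e n))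
  exact hI.2.1 hUniv

lemma borI_char (hI : SigmaIdeal I) {X : Set ℝ} (hX : MeasurableSet[BorI I] X) :
    ∃ C : Set ℝ, MeasurableSet C ∧ X \ C ∈ I ∧ C \ X ∈ I := by
  unfold BorI at hX
  induction X, hX using MeasurableSpace.generateFrom_induction with
  | hC t ht _ =>
    rcases ht with ht | ht
    · exact ⟨t, ht, by simp [hI.1], by simp [hI.1]⟩
    · exact ⟨∅, MeasurableSet.empty, by simpa using ht, by simp [hI.1]⟩
  | empty => exact ⟨∅, MeasurableSet.empty, by simp [hI.1], by simp [hI.1]⟩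
  | compl t ht ih =>
    obtain ⟨C, hCm, h1, h2⟩ := ih
    refine ⟨Cᶜ, hCm.compl, ?_, ?_⟩
    · have : tᶜ \ Cᶜ = C \ t := by ext z; simp [Set.mem_diff]; tauto
      rwa [this]
    · have : Cᶜ \ tᶜ = t \ C := by ext z; simp [Set.mem_diff]; tauto
      rwa [this]
  | iUnion s hs ih =>
    choose C hCm h1 h2 using ih
    refine ⟨⋃ n, C n, MeasurableSet.iUnion hCm, ?_, ?_⟩
    · have hsub : (⋃ i, s i) \ (⋃ n, C n) ⊆ ⋃ n, (s n \ C n) := by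
        intro x hx
        obtain ⟨n, hn⟩ := Set.mem_iUnion.mp hx.1
        exact Set.mem_iUnion.mpr ⟨n, hn, fun h => hx.2 (Set.mem_iUnion.mpr ⟨n, h⟩)⟩
      exact hI.2.2.1 _ _ hsub (hI.2.2.2 _ h1)
    · have hsub : (⋃ n, C n) \ (⋃ i, s i) ⊆ ⋃ n, (C n \ s n) := by
        intro x hx
        obtain ⟨n, hn⟩ := Set.mem_iUnion.mp hx.1
        exact Set.mem_iUnion.mpr ⟨n, hn, fun h => hx.2 (Set.mem_iUnion.mpr ⟨n, h⟩)⟩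
      exact hI.2.2.1 _ _ hsub (hI.2.2.2 _ h2)

lemma exists_borel_pos_subset (hI : SigmaIdeal I) (hbase : BorelBase I) {X : Set ℝ}
    (hX : MeasurableSet[BorI I] X) (hXI : X ∉ I) :
    ∃ D : Set ℝ, MeasurableSet D ∧ D ⊆ X ∧ D ∉ I := by
  obtain ⟨C, hCm, h1, h2⟩ := borI_char hI hX
  obtain ⟨J, hJI, hJm, hCJ⟩ := hbase _ h2
  refine ⟨C \ J, hCm.diff hJm, ?_, ?_⟩
  · intro x hx
    by_contra hxX
    exact hx.2 (hCJ ⟨hx.1, hxX⟩)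
  · intro hD
    apply hXI
    have hsub : X ⊆ (C \ J) ∪ (J ∪ (X \ C)) := by
      intro x hx
      by_cases hC : x ∈ C
      · by_cases hJ : x ∈ J
        · exact Or.inr (Or.inl hJ)
        · exact Or.inl ⟨hC, hJ⟩
      · exact Or.inr (Or.inr ⟨hx, hC⟩)
    exact hI.2.2.1 _ _ hsub (ideal_union hI hD (ideal_union hI hJI h1))

lemma continuum_le_mk_of_pos (hI : SigmaIdeal I) (hsing : ContainsSingletons I)
    {C : Set ℝ} (hCm : MeasurableSet C) (hC : C ∉ I) : 𝔠 ≤ #C := by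
  have hct : ¬ C.Countable := fun h => hC (ctbl_mem hI hsing h)
  have h2 : ¬ Countable ↥C := by rwa [Set.countable_coe_iff]
  letI : StandardBorelSpace ↥C := hCm.standardBorel
  have e := PolishSpace.measurableEquivNatBoolOfNotCountable (α := ↥C) h2
  have hcongr : #↥C = #(ℕ → Bool) := Cardinal.mk_congr e.toEquiv
  have : (𝔠 : Cardinal) = #(ℕ → Bool) := by
    rw [← Cardinal.two_power_aleph0, ← Cardinal.mk_bool, ← Cardinal.mk_nat,
      Cardinal.power_def]
  rw [this, ← hcongr]

lemma card_measurable_le : #{t : Set ℝ | MeasurableSet t} ≤ 𝔠 := by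
  have h1 : (Real.measurableSpace : MeasurableSpace ℝ)
      = MeasurableSpace.generateFrom (Set.range (Set.Iio : ℝ → Set ℝ)) := by
    rw [Real.measurableSpace, borel_eq_generateFrom_Iio]
  have h2 : #(Set.range (Set.Iio : ℝ → Set ℝ)) ≤ 𝔠 := by
    refine Cardinal.mk_range_le.trans ?_
    rw [Cardinal.mk_real]
  have h3 := MeasurableSpace.cardinal_measurableSet_le_continuum h2
  rwa [← h1] at h3


end AuxLemmas

lemma exists_pair_function {σ : Type} [LinearOrder σ] [WellFoundedLT σ]
    (hseg : ∀ a : σ, #{b : σ // b < a} < 𝔠)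
    (K : σ → Set ℝ) (hK : ∀ a, 𝔠 ≤ #(K a))
    (pc : ℝ → Set ℝ) (hpc_mem : ∀ x, x ∈ pc x) (hpc_ct : ∀ x, (pc x).Countable)
    (hpc_eq : ∀ x y : ℝ, x ∈ pc y → pc x = pc y) :
    ∃ f : σ → ℝ × ℝ, ∀ a : σ, (f a).1 ∈ K a ∧ (f a).2 ∈ K a ∧
      ∀ b : σ, (f b).2 ∉ pc ((f a).1) := by
  classical
  have hstep : ∀ (a : σ) (ih : ∀ b, b < a → ℝ × ℝ), ∃ p : ℝ × ℝ,
      p.1 ∈ K a ∧ p.2 ∈ K a ∧ p.2 ∉ pc p.1 ∧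
      ∀ (b : σ) (hb : b < a), p.1 ∉ pc (ih b hb).1 ∧ p.1 ∉ pc (ih b hb).2 ∧
        p.2 ∉ pc (ih b hb).1 ∧ p.2 ∉ pc (ih b hb).2 := by
    intro a ih
    set bad : Set ℝ :=
      ⋃ b : {b : σ // b < a}, (pc (ih b.1 b.2).1 ∪ pc (ih b.1 b.2).2) with hbad
    have hbadcard : #bad < 𝔠 := by
      refine lt_of_le_of_lt (Cardinal.mk_iUnion_le _) ?_
      refine Cardinal.mul_lt_of_lt Cardinal.aleph0_le_continuum (hseg a) ?_
      refine lt_of_le_of_lt (ciSup_le' fun b => ?_) Cardinal.aleph0_lt_continuum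
      exact Set.Countable.le_aleph0 (((hpc_ct _).union (hpc_ct _)))
    have hx : (K a \ bad).Nonempty := by
      rw [Set.nonempty_iff_ne_empty]
      intro h
      rw [Set.diff_eq_empty] at h
      exact absurd ((hK a).trans (Cardinal.mk_le_mk_of_subset h)) (not_le.mpr hbadcard)
    obtain ⟨x, hxK, hxbad⟩ := hx
    have hy : (K a \ (bad ∪ pc x)).Nonempty := by
      rw [Set.nonempty_iff_ne_empty]
      intro h
      rw [Set.diff_eq_empty] at h
      have hcard : #(bad ∪ pc x : Set ℝ) < 𝔠 := by
        refine lt_of_le_of_lt (Cardinal.mk_union_le _ _) ?_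
        exact Cardinal.add_lt_of_lt Cardinal.aleph0_le_continuum hbadcard
          (lt_of_le_of_lt ((hpc_ct x).le_aleph0) Cardinal.aleph0_lt_continuum)
      exact absurd ((hK a).trans (Cardinal.mk_le_mk_of_subset h)) (not_le.mpr hcard)
    obtain ⟨y, hyK, hybad⟩ := hy
    refine ⟨(x, y), hxK, hyK, fun h => hybad (Or.inr h), ?_⟩
    intro b hb
    have hxb : x ∉ pc (ih b hb).1 ∪ pc (ih b hb).2 := fun h =>
      hxbad (Set.mem_iUnion.mpr ⟨⟨b, hb⟩, h⟩)
    have hyb : y ∉ pc (ih b hb).1 ∪ pc (ih b hb).2 := fun h =>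
      hybad (Or.inl (Set.mem_iUnion.mpr ⟨⟨b, hb⟩, h⟩))
    exact ⟨fun h => hxb (Or.inl h), fun h => hxb (Or.inr h),
      fun h => hyb (Or.inl h), fun h => hyb (Or.inr h)⟩
  have wf : WellFounded ((· < ·) : σ → σ → Prop) := wellFounded_lt
  set f : σ → ℝ × ℝ := wf.fix (fun a ih => Classical.choose (hstep a ih)) with hf
  have hfeq : ∀ a, f a = Classical.choose (hstep a (fun b _ => f b)) := by
    intro a
    rw [hf]
    exact wf.fix_eq _ a
  have hspec : ∀ a : σ, (f a).1 ∈ K a ∧ (f a).2 ∈ K a ∧ (f a).2 ∉ pc (f a).1 ∧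
      ∀ (b : σ) (hb : b < a), (f a).1 ∉ pc (f b).1 ∧ (f a).1 ∉ pc (f b).2 ∧
        (f a).2 ∉ pc (f b).1 ∧ (f a).2 ∉ pc (f b).2 := by
    intro a
    rw [hfeq a]
    exact Classical.choose_spec (hstep a (fun b _ => f b))
  refine ⟨f, fun a => ⟨(hspec a).1, (hspec a).2.1, ?_⟩⟩
  intro b hmem
  rcases lt_trichotomy b a with h | h | h
  · have hx1 := ((hspec a).2.2.2 b h).2.1
    have heq : pc ((f b).2) = pc ((f a).1) := hpc_eq _ _ hmem
    exact hx1 (by rw [heq]; exact hpc_mem _)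
  · subst h
    exact (hspec b).2.2.1 hmem
  · exact ((hspec b).2.2.2 a h).2.2.1 hmem

theorem partition_into_finite_sets_nonmeasurable_not_completely_union
    (I : Set (Set ℝ)) (hI : SigmaIdeal I) (hsing : ContainsSingletons I)
    (hbase : BorelBase I) (htrans : TranslationInvariant I)
    (P : Set (Set ℝ)) (hfin : ∀ p ∈ P, p.Finite) (hP : IsPartitionOfReals P) :
    ∃ A₁ ⊆ P, INonmeasurable I (⋃₀ A₁) ∧
      ¬ CompletelyINonmeasurable I (⋃₀ A₁) := by
  classical
  obtain ⟨-, hcov, hdisj⟩ := hP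
  -- the piece function
  have hex : ∀ x : ℝ, ∃ p, p ∈ P ∧ x ∈ p := by
    intro x
    have hx : x ∈ ⋃₀ P := by rw [hcov]; trivial
    obtain ⟨p, hp, hxp⟩ := hx
    exact ⟨p, hp, hxp⟩
  choose pc hpcP hpc_mem using hex
  have hpc_uniq : ∀ {x : ℝ} {p : Set ℝ}, p ∈ P → x ∈ p → p = pc x := by
    intro x p hp hx
    by_contra h
    have := hdisj p hp (pc x) (hpcP x) h
    have hmem : x ∈ p ∩ pc x := ⟨hx, hpc_mem x⟩
    rw [this] at hmem
    exact hmem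
  have hpc_eq : ∀ x y : ℝ, x ∈ pc y → pc x = pc y := fun x y hx =>
    (hpc_uniq (hpcP y) hx).symm
  have hpc_ct : ∀ x, (pc x).Countable := fun x => (hfin _ (hpcP x)).countable
  -- find a good unit interval
  set Fm : ℤ → Set ℝ :=
    fun m => ⋃₀ {p | p ∈ P ∧ (p ∩ Set.Ico (m : ℝ) (m + 1)).Nonempty} with hFm
  have hmEx : ∃ m : ℤ, (Fm m)ᶜ ∉ I := by
    by_contra hcon
    push_neg at hcon
    obtain ⟨e, he⟩ := exists_surjective_nat ℤ
    have hJ : (⋃ n : ℕ, (Fm (e n))ᶜ) ∈ I := hI.2.2.2 _ fun n => hcon (e n)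
    have hne : ((⋃ n : ℕ, (Fm (e n))ᶜ)ᶜ).Nonempty := by
      rcases Set.eq_empty_or_nonempty ((⋃ n : ℕ, (Fm (e n))ᶜ)ᶜ) with h | h
      · rw [Set.compl_empty_iff] at h
        exact absurd (h ▸ hJ) hI.2.1
      · exact h
    obtain ⟨x, hx⟩ := hne
    have hxF : ∀ m : ℤ, x ∈ Fm m := by
      intro m
      obtain ⟨n, rfl⟩ := he m
      by_contra h
      exact hx (Set.mem_iUnion.mpr ⟨n, h⟩)
    have hmeet : ∀ m : ℤ, ∃ z, z ∈ pc x ∧ z ∈ Set.Ico (m : ℝ) (m + 1) := by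
      intro m
      obtain ⟨p, ⟨hpP, z, hz⟩, hxp⟩ := hxF m
      have hpp : p = pc x := hpc_uniq hpP hxp
      exact ⟨z, hpp ▸ hz.1, hz.2⟩
    choose z hz1 hz2 using hmeet
    have hinj : Function.Injective z := by
      intro m k hmk
      have h1 : ⌊z m⌋ = m := Int.floor_eq_iff.mpr ⟨(hz2 m).1, (hz2 m).2⟩
      have h2 : ⌊z k⌋ = k := Int.floor_eq_iff.mpr ⟨(hz2 k).1, (hz2 k).2⟩
      rw [← h1, ← h2, hmk]
    exact (Set.infinite_of_injective_forall_mem hinj hz1) (hfin _ (hpcP x))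
  obtain ⟨m, hR⟩ := hmEx
  set B : Set ℝ := Set.Ico (m : ℝ) (m + 1) with hB
  have hBm : MeasurableSet B := measurableSet_Ico
  have hBpos : B ∉ I := Ico_notMem_ideal hI htrans m
  set forced : Set (Set ℝ) := {p | p ∈ P ∧ (p ∩ B).Nonempty} with hforced
  have hFeq : Fm m = ⋃₀ forced := rfl
  have hBsubF : ∀ (A₁ : Set (Set ℝ)), forced ⊆ A₁ → B ⊆ ⋃₀ A₁ := by
    intro A₁ hsub x hx
    exact ⟨pc x, hsub ⟨hpcP x, ⟨x, hpc_mem x, hx⟩⟩, hpc_mem x⟩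
  have hBmBorI : MeasurableSet[BorI I] B :=
    MeasurableSpace.measurableSet_generateFrom (Or.inl hBm)
  by_cases hFmeas : MeasurableSet[BorI I] (Fm m)
  · -- main case: the forced union is measurable, so its complement is a positive BorI set
    have hRBorI : MeasurableSet[BorI I] (Fm m)ᶜ := hFmeas.compl
    obtain ⟨D, hDm, hDR, hDpos⟩ := exists_borel_pos_subset hI hbase hRBorI hR
    set ιset : Set (Set ℝ) := {C | MeasurableSet C ∧ C ⊆ D ∧ C ∉ I} with hιset
    haveI hιne : Nonempty ↥ιset := ⟨⟨D, hDm, subset_rfl, hDpos⟩⟩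
    have hιcard : #↥ιset ≤ 𝔠 := by
      refine le_trans (Cardinal.mk_le_mk_of_subset (fun C hC => hC.1)) ?_
      exact card_measurable_le
    set σty := (Cardinal.continuum).ord.ToType with hσty
    have hσcard : #σty = 𝔠 := Cardinal.mk_ord_toType _
    obtain ⟨j⟩ : Nonempty (↥ιset ↪ σty) := by
      rw [← Cardinal.le_def, hσcard]
      exact hιcard
    set g : σty → ↥ιset := Function.invFun j with hg
    have hgsurj : Function.Surjective g := Function.invFun_surjective j.injective
    have hseg : ∀ a : σty, #{b : σty // b < a} < 𝔠 := fun a =>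
      Cardinal.mk_Iio_ord_toType a
    have hK : ∀ a : σty, 𝔠 ≤ #((g a : Set ℝ)) := fun a =>
      continuum_le_mk_of_pos hI hsing (g a).2.1 (g a).2.2.2
    obtain ⟨f, hf⟩ := exists_pair_function hseg (fun a => (g a : Set ℝ)) hK
      pc hpc_mem hpc_ct hpc_eq
    set A₁ : Set (Set ℝ) := forced ∪ {q | ∃ a : σty, q = pc ((f a).1)} with hA₁
    have hA₁P : A₁ ⊆ P := by
      rintro p (hp | ⟨a, rfl⟩)
      · exact hp.1
      · exact hpcP _
    have hXB : ⋃₀ A₁ ∩ B = B :=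
      Set.inter_eq_right.mpr (hBsubF A₁ Set.subset_union_left)
    have hSsub : ∀ a : σty, pc ((f a).1) ⊆ ⋃₀ A₁ := by
      intro a x hx
      exact ⟨pc ((f a).1), Or.inr ⟨a, rfl⟩, hx⟩
    have hXsub : ⋃₀ A₁ ⊆ Fm m ∪ ⋃ a : σty, pc ((f a).1) := by
      rintro x ⟨p, hp | ⟨a, rfl⟩, hxp⟩
      · exact Or.inl ⟨p, hp, hxp⟩
      · exact Or.inr (Set.mem_iUnion.mpr ⟨a, hxp⟩)
    refine ⟨A₁, hA₁P, ?_, ?_⟩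
    · -- nonmeasurability
      intro hXm
      have hDBorI : MeasurableSet[BorI I] D :=
        MeasurableSpace.measurableSet_generateFrom (Or.inl hDm)
      by_cases hEI : (⋃₀ A₁ ∩ D) ∈ I
      · -- then D \ X is positive and measurable; it contains x_a for the right a: contradiction
        have hDdiff_pos : D \ ⋃₀ A₁ ∉ I := by
          intro h
          apply hDpos
          refine hI.2.2.1 D ((⋃₀ A₁ ∩ D) ∪ (D \ ⋃₀ A₁)) ?_ (ideal_union hI hEI h)
          intro x hx
          by_cases hxX : x ∈ ⋃₀ A₁
          · exact Or.inl ⟨hxX, hx⟩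
          · exact Or.inr ⟨hx, hxX⟩
        have hDdiffBorI : MeasurableSet[BorI I] (D \ ⋃₀ A₁) := hDBorI.diff hXm
        obtain ⟨D', hD'm, hD'sub, hD'pos⟩ :=
          exists_borel_pos_subset hI hbase hDdiffBorI hDdiff_pos
        obtain ⟨a, ha⟩ := hgsurj ⟨D', hD'm, hD'sub.trans Set.diff_subset, hD'pos⟩
        have hxa : (f a).1 ∈ (g a : Set ℝ) := (hf a).1
        rw [ha] at hxa
        have : (f a).1 ∈ D \ ⋃₀ A₁ := hD'sub hxa
        exact this.2 (hSsub a (hpc_mem ((f a).1)))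
      · -- then X ∩ D is positive and measurable; it contains y_a: contradiction
        have hEBorI : MeasurableSet[BorI I] (⋃₀ A₁ ∩ D) := hXm.inter hDBorI
        obtain ⟨D', hD'm, hD'sub, hD'pos⟩ :=
          exists_borel_pos_subset hI hbase hEBorI hEI
        obtain ⟨a, ha⟩ := hgsurj ⟨D', hD'm,
          hD'sub.trans Set.inter_subset_right, hD'pos⟩
        have hya : (f a).2 ∈ (g a : Set ℝ) := (hf a).2.1
        rw [ha] at hya
        have hyX : (f a).2 ∈ ⋃₀ A₁ ∩ D := hD'sub hya
        have hyD : (f a).2 ∈ D := hyX.2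
        rcases hXsub hyX.1 with hyF | hyS
        · exact (hDR hyD) hyF
        · obtain ⟨b, hb⟩ := Set.mem_iUnion.mp hyS
          exact (hf b).2.2 a hb
    · -- not completely nonmeasurable, witnessed by B
      intro hcomp
      refine hcomp B hBm hBpos ?_
      rw [hXB]
      exact hBmBorI
  · -- easy case: the forced union itself is nonmeasurable
    refine ⟨forced, fun p hp => hp.1, ?_, ?_⟩
    · exact fun h => hFmeas (by rwa [hFeq])
    · intro hcomp
      refine hcomp B hBm hBpos ?_
      have : ⋃₀ forced ∩ B = B := Set.inter_eq_right.mpr (hBsubF forced subset_rfl)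
      rw [this]
      exact hBmBorI
end

section
/- Let P ⊆ [ℝ]^{≤ω} be a point-countable cover of ℝ by countable sets. Then there exists a subfamily A ⊆ P such that ⋃A is completely [ℝ]^{≤ω}-nonmeasurable, i.e. ⋃A is a Bernstein set. -/
open Set Cardinal

lemma mk_cantor : #(ℕ → Bool) = Cardinal.continuum := by
  simp [Cardinal.mk_arrow]

lemma uncountable_of_cantor_inj {C : Set ℝ} (f : (ℕ → Bool) → ℝ)
    (hf : range f ⊆ C) (hinj : Function.Injective f) : ¬C.Countable := by
  intro hc
  have hcnt : Countable (ℕ → Bool) := by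
    have := hc.to_subtype
    exact Function.Injective.countable (f := fun x => (⟨f x, hf (mem_range_self x)⟩ : C))
      (fun a b hab => hinj (by simpa using congrArg Subtype.val hab))
  exact Cardinal.aleph0_lt_continuum.not_ge
    (mk_cantor ▸ Cardinal.mk_le_aleph0_iff.2 hcnt)

/-- Every uncountable closed set of reals has at least continuum many points. -/
lemma continuum_le_mk_of_closed {K : Set ℝ} (hK : IsClosed K) (h : ¬K.Countable) :
    Cardinal.continuum ≤ #K := by
  obtain ⟨f, hf, -, hinj⟩ := hK.exists_nat_bool_injection_of_not_countable h
  have : #(ℕ → Bool) ≤ #K := by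
    refine ⟨⟨fun x => ⟨f x, hf (mem_range_self x)⟩, ?_⟩⟩
    intro a b hab
    exact hinj (by simpa using congrArg Subtype.val hab)
  simpa [Cardinal.mk_arrow] using this

/-- Every uncountable Borel subset of ℝ contains an uncountable closed set. -/
lemma exists_closed_uncountable_subset {B : Set ℝ} (hB : MeasurableSet B)
    (h : ¬B.Countable) : ∃ K, K ⊆ B ∧ IsClosed K ∧ ¬K.Countable := by
  obtain ⟨t', ht'le, ht'polish, hclosed, -⟩ :=
    (MeasureTheory.isClopenable_iff_measurableSet (γ := ℝ)).2 hB
  obtain ⟨f, hfB, hfc, hinj⟩ :=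
    @IsClosed.exists_nat_bool_injection_of_not_countable ℝ t' ht'polish B hclosed h
  have hfc' : @Continuous (ℕ → Bool) ℝ _ UniformSpace.toTopologicalSpace f := by
    rw [@continuous_def (ℕ → Bool) ℝ _ UniformSpace.toTopologicalSpace f]
    intro U hU
    exact (@continuous_def _ _ _ t' f).1 hfc U (hU.mono ht'le)
  refine ⟨range f, hfB, ?_, ?_⟩
  · exact @IsCompact.isClosed ℝ UniformSpace.toTopologicalSpace _ (range f)
      (@isCompact_range _ ℝ _ UniformSpace.toTopologicalSpace _ f hfc')
  · exact uncountable_of_cantor_inj f le_rfl hinj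

/-- The family of uncountable closed subsets of ℝ has at most continuum many members. -/
lemma mk_closedUnc_le : #({F : Set ℝ | IsClosed F ∧ ¬F.Countable}) ≤ Cardinal.continuum := by
  have key : ∀ (F G : Set ℝ), IsClosed G →
      ({q : ℚ × ℚ | Ioo (q.1 : ℝ) q.2 ∩ F = ∅} = {q : ℚ × ℚ | Ioo (q.1 : ℝ) q.2 ∩ G = ∅}) →
      F ⊆ G := by
    intro F G hG hq x hxF
    by_contra hxG
    obtain ⟨ε, hε, hball⟩ := Metric.isOpen_iff.1 hG.isOpen_compl x hxG
    obtain ⟨a, ha1, ha2⟩ := exists_rat_btwn (show x - ε < x by linarith)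
    obtain ⟨b, hb1, hb2⟩ := exists_rat_btwn (show x < x + ε by linarith)
    have hsub : Set.Ioo (a : ℝ) b ⊆ Gᶜ := by
      intro y hy
      apply hball
      rw [Metric.mem_ball, Real.dist_eq, abs_lt]
      constructor <;> [nlinarith [hy.1, hy.2]; nlinarith [hy.1, hy.2]]
    have hmem : (a, b) ∈ {q : ℚ × ℚ | Ioo (q.1 : ℝ) q.2 ∩ G = ∅} := by
      rw [Set.mem_setOf_eq, Set.eq_empty_iff_forall_notMem]
      exact fun y hy => hsub hy.1 hy.2
    rw [← hq] at hmem
    rw [Set.mem_setOf_eq, Set.eq_empty_iff_forall_notMem] at hmem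
    exact hmem x ⟨⟨ha2, hb1⟩, hxF⟩
  have hinj : Function.Injective
      (fun F : {F : Set ℝ // IsClosed F ∧ ¬F.Countable} =>
        {q : ℚ × ℚ | Ioo (q.1 : ℝ) q.2 ∩ F.1 = ∅}) := by
    intro F G h
    exact Subtype.ext (subset_antisymm (key _ _ G.2.1 h) (key _ _ F.2.1 h.symm))
  calc #({F : Set ℝ | IsClosed F ∧ ¬F.Countable})
      ≤ #(Set (ℚ × ℚ)) := Cardinal.mk_le_of_injective hinj
    _ = Cardinal.continuum := by
        rw [Cardinal.mk_set, Cardinal.mk_eq_aleph0 (ℚ × ℚ), Cardinal.two_power_aleph0]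


/-- Index type of size continuum, well-ordered. -/
abbrev CtblIdx : Type := Cardinal.continuum.ord.ToType

/-- The specification of a valid step in the transfinite construction:
we pick a member `xp.2` of the cover `P` meeting the closed set `K`,
avoiding all previously excluded points, together with a new excluded
point `xp.1 ∈ K` avoiding all sets chosen so far. -/
def SpecAt (P : Set (Set ℝ)) (K : Set ℝ) (i : CtblIdx)
    (g : ∀ β, β < i → ℝ × Set ℝ) (xp : ℝ × Set ℝ) : Prop :=
  xp.2 ∈ P ∧ (K ∩ xp.2).Nonempty ∧ (∀ β (hβ : β < i), (g β hβ).1 ∉ xp.2) ∧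
    xp.1 ∈ K ∧ xp.1 ∉ xp.2 ∧ ∀ β (hβ : β < i), xp.1 ∉ (g β hβ).2

lemma bern_aux (P : Set (Set ℝ)) (K : Set ℝ) (i : CtblIdx)
    (g : ∀ β, β < i → ℝ × Set ℝ) :
    ∃ xp : ℝ × Set ℝ, (∃ yp, SpecAt P K i g yp) → SpecAt P K i g xp := by
  by_cases h : ∃ yp, SpecAt P K i g yp
  · exact ⟨h.choose, fun _ => h.choose_spec⟩
  · exact ⟨(0, ∅), fun hy => absurd hy h⟩

noncomputable def bern (P : Set (Set ℝ)) (K : CtblIdx → Set ℝ) : CtblIdx → ℝ × Set ℝ :=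
  WellFounded.fix wellFounded_lt
    (fun i ih => (bern_aux P (K i) i ih).choose)

lemma bern_eq (P : Set (Set ℝ)) (K : CtblIdx → Set ℝ) (i : CtblIdx) :
    bern P K i = (bern_aux P (K i) i (fun β _ => bern P K β)).choose := by
  unfold bern
  rw [WellFounded.fix_eq]

/-- The cardinality step: a valid step always exists. -/
lemma exists_spec (P : Set (Set ℝ)) (hctbl : ∀ p ∈ P, p.Countable)
    (hcover : ⋃₀ P = Set.univ) (hpoint : ∀ x : ℝ, {p ∈ P | x ∈ p}.Countable)
    {K : Set ℝ} (hK : Cardinal.continuum ≤ #K)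
    (i : CtblIdx) (g : ∀ β, β < i → ℝ × Set ℝ)
    (hg : ∀ β hβ, ((g β hβ).2).Countable) :
    ∃ xp : ℝ × Set ℝ, SpecAt P K i g xp := by
  classical
  set A : {β : CtblIdx // β < i} → Set ℝ := fun β =>
    (g β β.2).2 ∪ ⋃ p ∈ {p ∈ P | (g β β.2).1 ∈ p}, p with hA_def
  have hA : ∀ β, (A β).Countable := fun β =>
    (hg _ _).union ((hpoint _).biUnion (fun p hp => hctbl p hp.1))
  set U : Set ℝ := ⋃ β, A β with hU_def
  have hι : #({β : CtblIdx // β < i}) < Cardinal.continuum := by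
    have := Cardinal.mk_Iio_ord_toType i
    convert this using 2
    rfl
  have hUlt : #U < Cardinal.continuum := by
    refine lt_of_le_of_lt (Cardinal.mk_iUnion_le A) ?_
    refine Cardinal.mul_lt_of_lt Cardinal.aleph0_le_continuum hι ?_
    refine lt_of_le_of_lt ?_ Cardinal.aleph0_lt_continuum
    exact ciSup_le' fun β => Cardinal.mk_le_aleph0_iff.2 (hA β).to_subtype
  have hns : (K \ U).Nonempty := by
    rw [Set.diff_nonempty]
    intro hsub
    exact (hK.trans (Cardinal.mk_le_mk_of_subset hsub)).not_gt hUlt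
  obtain ⟨y, hyK, hyU⟩ := hns
  have hy : y ∈ ⋃₀ P := by rw [hcover]; trivial
  obtain ⟨p, hpP, hyp⟩ := hy
  have hpx : ∀ β (hβ : β < i), (g β hβ).1 ∉ p := by
    intro β hβ hmem
    exact hyU (Set.mem_iUnion.2 ⟨⟨β, hβ⟩,
      Set.mem_union_right _ (Set.mem_biUnion ⟨hpP, hmem⟩ hyp)⟩)
  have hns2 : (K \ (U ∪ p)).Nonempty := by
    rw [Set.diff_nonempty]
    intro hsub
    refine (hK.trans (Cardinal.mk_le_mk_of_subset hsub)).not_gt ?_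
    refine lt_of_le_of_lt (Cardinal.mk_union_le _ _) ?_
    refine Cardinal.add_lt_of_lt Cardinal.aleph0_le_continuum hUlt ?_
    exact lt_of_le_of_lt (Cardinal.mk_le_aleph0_iff.2 (hctbl p hpP).to_subtype)
      Cardinal.aleph0_lt_continuum
  obtain ⟨x, hxK, hxU⟩ := hns2
  refine ⟨(x, p), hpP, ⟨y, hyK, hyp⟩, hpx, hxK,
    fun hxp => hxU (Set.mem_union_right _ hxp), ?_⟩
  intro β hβ hmem
  exact hxU (Set.mem_union_left _
    (Set.mem_iUnion.2 ⟨⟨β, hβ⟩, Set.mem_union_left _ hmem⟩))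

lemma bern_spec (P : Set (Set ℝ)) (hctbl : ∀ p ∈ P, p.Countable)
    (hcover : ⋃₀ P = Set.univ) (hpoint : ∀ x : ℝ, {p ∈ P | x ∈ p}.Countable)
    (K : CtblIdx → Set ℝ) (hK : ∀ i, Cardinal.continuum ≤ #(K i)) :
    ∀ i : CtblIdx, SpecAt P (K i) i (fun β _ => bern P K β) (bern P K i) := by
  intro i
  induction i using WellFoundedLT.induction with
  | ind i IH =>
    have h : ∃ xp, SpecAt P (K i) i (fun β _ => bern P K β) xp :=
      exists_spec P hctbl hcover hpoint (hK i) i _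
        (fun β hβ => hctbl _ (IH β hβ).1)
    rw [bern_eq]
    exact (bern_aux P (K i) i (fun β _ => bern P K β)).choose_spec h

/-- Core construction: a subfamily whose union meets every uncountable closed
set and whose complement does too. -/
lemma core_construction (P : Set (Set ℝ)) (hctbl : ∀ p ∈ P, p.Countable)
    (hcover : ⋃₀ P = Set.univ) (hpoint : ∀ x : ℝ, {p ∈ P | x ∈ p}.Countable) :
    ∃ A ⊆ P, ∀ C : Set ℝ, IsClosed C → ¬C.Countable →
      (C ∩ ⋃₀ A).Nonempty ∧ (C ∩ (⋃₀ A)ᶜ).Nonempty := by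
  classical
  have hne : Nonempty ↥{F : Set ℝ | IsClosed F ∧ ¬F.Countable} := by
    refine ⟨⟨Icc 0 1, isClosed_Icc, ?_⟩⟩
    intro h
    exact Cardinal.aleph0_lt_continuum.not_ge
      (Cardinal.mk_Icc_real zero_lt_one ▸ Cardinal.mk_le_aleph0_iff.2 h.to_subtype)
  have hmkι : #CtblIdx = Cardinal.continuum := by
    exact Cardinal.mk_ord_toType Cardinal.continuum
  obtain ⟨j⟩ : Nonempty (↥{F : Set ℝ | IsClosed F ∧ ¬F.Countable} ↪ CtblIdx) := by
    rw [← Cardinal.le_def, hmkι]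
    exact mk_closedUnc_le
  have he : Function.Surjective (Function.invFun j) := Function.invFun_surjective j.injective
  set K : CtblIdx → Set ℝ := fun i => ((Function.invFun j i : ↥{F : Set ℝ | IsClosed F ∧ ¬F.Countable}) : Set ℝ) with hK_def
  have hKprop : ∀ i, IsClosed (K i) ∧ ¬(K i).Countable := fun i => (Function.invFun j i).2
  have hK : ∀ i, Cardinal.continuum ≤ #(K i) :=
    fun i => continuum_le_mk_of_closed (hKprop i).1 (hKprop i).2
  have hspec := bern_spec P hctbl hcover hpoint K hK
  refine ⟨Set.range (fun i => (bern P K i).2), ?_, ?_⟩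
  · rintro _ ⟨i, rfl⟩
    exact (hspec i).1
  intro C hCc hCu
  obtain ⟨i, hi⟩ := he ⟨C, hCc, hCu⟩
  have hKi : K i = C := congrArg Subtype.val hi
  constructor
  · obtain ⟨y, hyK, hyp⟩ := (hspec i).2.1
    exact ⟨y, hKi ▸ hyK, Set.mem_sUnion.2 ⟨(bern P K i).2, ⟨i, rfl⟩, hyp⟩⟩
  · refine ⟨(bern P K i).1, hKi ▸ (hspec i).2.2.2.1, ?_⟩
    intro hmem
    obtain ⟨q, hqA, hq⟩ := Set.mem_sUnion.1 hmem
    obtain ⟨β, rfl⟩ := hqA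
    have htri := lt_trichotomy β i
    rcases htri with h | h | h
    · exact (hspec i).2.2.2.2.2 β h hq
    · exact (hspec i).2.2.2.2.1 (h ▸ hq)
    · exact (hspec β).2.2.1 i h hq

/-- The σ-algebra of sets that differ from a Borel set by a countable set. -/
def borelModCtbl : MeasurableSpace ℝ :=
  { MeasurableSet' := fun T => ∃ B', MeasurableSet B' ∧ ((T \ B') ∪ (B' \ T)).Countable
    measurableSet_empty := ⟨∅, MeasurableSet.empty, by simp⟩
    measurableSet_compl := by
      rintro s ⟨B', hB', hc⟩
      refine ⟨B'ᶜ, hB'.compl, ?_⟩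
      have : sᶜ \ B'ᶜ ∪ B'ᶜ \ sᶜ = s \ B' ∪ B' \ s := by
        ext x; simp only [Set.mem_union, Set.mem_diff, Set.mem_compl_iff]; tauto
      rw [this]; exact hc
    measurableSet_iUnion := by
      intro f hf
      choose B hB hc using hf
      refine ⟨⋃ n, B n, MeasurableSet.iUnion hB, ?_⟩
      refine Set.Countable.mono ?_ (Set.countable_iUnion hc)
      intro x hx
      rcases hx with hx | hx
      · obtain ⟨hx1, hx2⟩ := hx
        obtain ⟨n, hn⟩ := Set.mem_iUnion.1 hx1
        exact Set.mem_iUnion.2 ⟨n, Or.inl ⟨hn, fun h => hx2 (Set.mem_iUnion.2 ⟨n, h⟩)⟩⟩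
      · obtain ⟨hx1, hx2⟩ := hx
        obtain ⟨n, hn⟩ := Set.mem_iUnion.1 hx1
        exact Set.mem_iUnion.2 ⟨n, Or.inr ⟨hn, fun h => hx2 (Set.mem_iUnion.2 ⟨n, h⟩)⟩⟩ }

/-- Every set measurable in Bor[countable] differs from a Borel set by a countable set. -/
lemma borI_ctbl_approx {T : Set ℝ} (hT : @MeasurableSet ℝ (BorI ctblIdeal) T) :
    ∃ B' : Set ℝ, MeasurableSet B' ∧ ((T \ B') ∪ (B' \ T)).Countable := by
  have hle : BorI ctblIdeal ≤ borelModCtbl := by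
    refine MeasurableSpace.generateFrom_le ?_
    rintro s (hs | hs)
    · exact ⟨s, hs, by simp⟩
    · exact ⟨∅, MeasurableSet.empty, by simpa [ctblIdeal] using hs⟩
  exact hle T hT


theorem pointCountable_cover_by_countable_sets_completely_nonmeasurable_union
    (P : Set (Set ℝ)) (hctbl : ∀ p ∈ P, p.Countable) (hcover : ⋃₀ P = Set.univ)
    (hpoint : ∀ x : ℝ, {p ∈ P | x ∈ p}.Countable) :
    ∃ A ⊆ P, CompletelyINonmeasurable ctblIdeal (⋃₀ A) ∧ BernsteinSet (⋃₀ A) := by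
  obtain ⟨A, hAP, hA⟩ := core_construction P hctbl hcover hpoint
  set S := ⋃₀ A with hS_def
  refine ⟨A, hAP, ?_, ?_⟩
  · -- completely nonmeasurable
    intro B hB hBc hmeas
    have hBu : ¬B.Countable := hBc
    obtain ⟨B', hB', hcnt⟩ := borI_ctbl_approx hmeas
    set C := (S ∩ B) \ B' ∪ B' \ (S ∩ B) with hC_def
    have hCm : MeasurableSet C := hcnt.measurableSet
    by_cases hbb : (B' ∩ B).Countable
    · have hD : ¬(B \ (B' ∪ C)).Countable := by
        intro hDc
        apply hBu
        have : B ⊆ (B \ (B' ∪ C)) ∪ ((B' ∩ B) ∪ C) := by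
          intro x hx
          by_cases h1 : x ∈ B'
          · exact Or.inr (Or.inl ⟨h1, hx⟩)
          · by_cases h2 : x ∈ C
            · exact Or.inr (Or.inr h2)
            · exact Or.inl ⟨hx, fun h => h.elim h1 h2⟩
        exact (hDc.union (hbb.union hcnt)).mono this
      obtain ⟨K, hKD, hKc, hKu⟩ :=
        exists_closed_uncountable_subset (hB.diff (hB'.union hCm)) hD
      obtain ⟨z, hzK, hzS⟩ := (hA K hKc hKu).1
      have hzD := hKD hzK
      have hz1 : z ∈ (S ∩ B) \ B' := ⟨⟨hzS, hzD.1⟩, fun h => hzD.2 (Or.inl h)⟩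
      exact hzD.2 (Or.inr (Or.inl hz1))
    · have hD : ¬((B' ∩ B) \ C).Countable := by
        intro hDc
        exact hbb (((hDc.union hcnt)).mono (fun x hx => by
          by_cases h : x ∈ C
          · exact Or.inr h
          · exact Or.inl ⟨hx, h⟩))
      obtain ⟨K, hKD, hKc, hKu⟩ :=
        exists_closed_uncountable_subset ((hB'.inter hB).diff hCm) hD
      obtain ⟨z, hzK, hzS⟩ := (hA K hKc hKu).2
      have hzD := hKD hzK
      have hz1 : z ∈ B' \ (S ∩ B) := ⟨hzD.1.1, fun h => hzS h.1⟩
      exact hzD.2 (Or.inr hz1)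
  · -- Bernstein
    intro Q hQ hQne
    have hQc : IsClosed Q := hQ.closed
    obtain ⟨f, hf, -, hinj⟩ := hQ.exists_nat_bool_injection hQne
    exact hA Q hQc (uncountable_of_cantor_inj f hf hinj)
end

section
/- Assume the negation of the Continuum Hypothesis (ω₁ < 2^ω). Then for every partition P ⊆ [ℝ]^{≤ω} of ℝ into countable sets there exists a subfamily A ⊆ P such that ⋃A is [ℝ]^{≤ω}-nonmeasurable but not completely [ℝ]^{≤ω}-nonmeasurable. -/
open Cardinal in
lemma borI_ctbl_eq : BorI ctblIdeal = (inferInstance : MeasurableSpace ℝ) := by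
  apply le_antisymm
  · exact MeasurableSpace.generateFrom_le (fun s hs => hs.elim id (fun h => h.measurableSet))
  · exact fun s hs => MeasurableSpace.measurableSet_generateFrom (Or.inl hs)

open Cardinal in
lemma card_of_meas_uncountable (s : Set ℝ) (hs : MeasurableSet s) (h : ¬ s.Countable) :
    𝔠 ≤ #s := by
  haveI := hs.standardBorel
  have hns : ¬ Countable ↥s := fun h' => h (Set.countable_coe_iff.mp h')
  have h1 : #↥s = #(ℕ → Bool) :=
    Cardinal.mk_congr (PolishSpace.measurableEquivNatBoolOfNotCountable hns).toEquiv
  have h2 : #(ℕ → Bool) = 𝔠 := by rw [Cardinal.mk_arrow]; simp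
  rw [h1, h2]

open Cardinal in
lemma nonmeas_of_card {s : Set ℝ} (h1 : ¬ s.Countable) (h2 : #s < 𝔠) :
    INonmeasurable ctblIdeal s := by
  intro hmeas
  have hb : MeasurableSet s := by
    have h' := hmeas
    rw [borI_ctbl_eq] at h'
    exact h'
  exact absurd (card_of_meas_uncountable s hb h1) (not_le.mpr h2)

universe u in
open Cardinal in
lemma aleph_one_lt_continuum_down (h : Cardinal.aleph.{u} 1 < Cardinal.continuum.{u}) :
    Cardinal.aleph.{0} 1 < Cardinal.continuum.{0} := by
  have h1 : Cardinal.lift.{u, 0} (Cardinal.aleph 1) = Cardinal.aleph 1 := by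
    rw [Cardinal.lift_aleph]
    simp
  have h2 : Cardinal.lift.{u, 0} Cardinal.continuum = Cardinal.continuum :=
    Cardinal.lift_continuum
  rw [← Cardinal.lift_lt.{0, u}, h1, h2]
  exact h

theorem partition_into_countable_sets_nonmeasurable_not_completely_of_not_CH
    (hCH : Cardinal.aleph 1 < Cardinal.continuum)
    (P : Set (Set ℝ)) (hctbl : ∀ p ∈ P, p.Countable) (hP : IsPartitionOfReals P) :
    ∃ A ⊆ P, INonmeasurable ctblIdeal (⋃₀ A) ∧
      ¬ CompletelyINonmeasurable ctblIdeal (⋃₀ A) := by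
  classical
  have hCH0 : Cardinal.aleph 1 < Cardinal.continuum.{0} := aleph_one_lt_continuum_down hCH
  -- P is uncountable
  have hPunc : ¬ P.Countable := by
    intro h
    have hcu : (⋃₀ P).Countable := h.sUnion hctbl
    rw [hP.2.1] at hcu
    exact Cardinal.not_countable_real hcu
  have hP1 : (Cardinal.aleph 1) ≤ Cardinal.mk ↥P := by
    exact not_lt.mp ((Cardinal.countable_iff_lt_aleph_one P).not.mp hPunc)
  obtain ⟨A, hAP, hAcard⟩ := Cardinal.le_mk_iff_exists_subset.mp hP1
  -- upper bound on the cardinality of the union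
  have hAne : Nonempty ↥A := by
    rw [← Cardinal.mk_ne_zero_iff, hAcard]
    exact Cardinal.aleph0_lt_aleph_one.ne_bot
  have hub : Cardinal.mk ↥(⋃₀ A) ≤ Cardinal.aleph 1 := by
    refine (Cardinal.mk_sUnion_le A).trans ?_
    have hsup : ⨆ s : A, Cardinal.mk ↥(s : Set ℝ) ≤ Cardinal.aleph0 :=
      ciSup_le fun s => Cardinal.mk_le_aleph0_iff.mpr ((hctbl s (hAP s.2)).to_subtype)
    calc Cardinal.mk ↥A * ⨆ s : A, Cardinal.mk ↥(s : Set ℝ) ≤ Cardinal.aleph 1 * Cardinal.aleph0 :=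
          mul_le_mul' (le_of_eq hAcard) hsup
      _ = Cardinal.aleph 1 := Cardinal.mul_eq_left (Cardinal.aleph0_le_aleph 1)
          Cardinal.aleph0_lt_aleph_one.le Cardinal.aleph0_ne_zero
  -- lower bound
  have hwit : ∀ p : ↥A, ∃ x, x ∈ (p : Set ℝ) := fun p =>
    Set.nonempty_iff_ne_empty.mpr (hP.1 p (hAP p.2))
  choose f hf using hwit
  have hmemU : ∀ p : ↥A, f p ∈ ⋃₀ A := fun p => Set.mem_sUnion.mpr ⟨p, p.2, hf p⟩
  have hinj : Function.Injective (fun p : ↥A => (⟨f p, hmemU p⟩ : ↥(⋃₀ A))) := by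
    intro p q h
    have hx : f p = f q := congrArg Subtype.val h
    by_contra hne
    have hpq : (p : Set ℝ) ≠ (q : Set ℝ) := fun h' => hne (Subtype.ext h')
    have hdisj := hP.2.2 p (hAP p.2) q (hAP q.2) hpq
    have hmem : f p ∈ (p : Set ℝ) ∩ (q : Set ℝ) := ⟨hf p, hx ▸ hf q⟩
    rw [hdisj] at hmem
    exact hmem
  have hlb : Cardinal.aleph 1 ≤ Cardinal.mk ↥(⋃₀ A) := by
    rw [← hAcard]; exact Cardinal.mk_le_of_injective hinj
  have hUunc : ¬ (⋃₀ A).Countable := fun h =>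
    absurd ((Cardinal.countable_iff_lt_aleph_one _).mp h) (not_lt.mpr hlb)
  -- build a family of continuum many disjoint uncountable Borel sets via a Borel isomorphism
  have hRnc : ¬ Countable ℝ := by
    intro h
    exact hUunc (Set.to_countable _)
  have hR2nc : ¬ Countable (ℝ × ℝ) := fun h => hRnc (Function.Injective.countable
    (f := fun x : ℝ => ((0 : ℝ), x)) (fun a b hab => (Prod.mk.injEq _ _ _ _).mp hab |>.2))
  let e : ℝ ≃ᵐ (ℝ × ℝ) := PolishSpace.measurableEquivOfNotCountable hRnc hR2nc
  let g : ℝ → ℝ := fun x => (e x).1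
  have hg : Measurable g := measurable_fst.comp e.measurable
  -- choose a fiber of g disjoint from ⋃₀ A
  have himg : Cardinal.mk ↥(g '' ⋃₀ A) < Cardinal.mk ℝ := by
    rw [Cardinal.mk_real]
    exact lt_of_le_of_lt ((Cardinal.mk_image_le).trans hub) hCH0
  have hne_univ : g '' ⋃₀ A ≠ Set.univ := by
    intro h
    rw [h, Cardinal.mk_univ] at himg
    exact lt_irrefl _ himg
  obtain ⟨t, ht⟩ := (Set.ne_univ_iff_exists_notMem _).mp hne_univ
  have hdisjQ : ⋃₀ A ∩ g ⁻¹' {t} = ∅ := by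
    ext x
    simp only [Set.mem_inter_iff, Set.mem_preimage, Set.mem_singleton_iff, Set.mem_empty_iff_false,
      iff_false, not_and]
    intro hx hgx
    exact ht ⟨x, hx, hgx⟩
  have hQmeas : MeasurableSet (g ⁻¹' {t}) := hg (measurableSet_singleton t)
  have hQunc : ¬ (g ⁻¹' {t}).Countable := by
    intro h
    have hmem : ∀ x : ℝ, e.symm (t, x) ∈ g ⁻¹' {t} := by
      intro x
      simp only [Set.mem_preimage, Set.mem_singleton_iff, g]
      rw [e.apply_symm_apply]
    have hinj2 : Function.Injective (fun x : ℝ => (⟨e.symm (t, x), hmem x⟩ : ↥(g ⁻¹' {t}))) := by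
      intro a b hab
      have h1 : e.symm (t, a) = e.symm (t, b) := congrArg Subtype.val hab
      have h2 := e.symm.injective h1
      exact ((Prod.mk.injEq _ _ _ _).mp h2).2
    have hle : Cardinal.mk ℝ ≤ Cardinal.mk ↥(g ⁻¹' {t}) := Cardinal.mk_le_of_injective hinj2
    have : Cardinal.mk ↥(g ⁻¹' {t}) ≤ Cardinal.aleph0 := Cardinal.mk_le_aleph0_iff.mpr h.to_subtype
    rw [Cardinal.mk_real] at hle
    exact absurd (hle.trans this) (not_le.mpr (Cardinal.aleph0_lt_continuum))
  refine ⟨A, hAP, ?_, ?_⟩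
  · exact nonmeas_of_card hUunc (lt_of_le_of_lt hub hCH0)
  · intro hcompl
    have := hcompl (g ⁻¹' {t}) hQmeas hQunc
    apply this
    rw [hdisjQ]
    exact @MeasurableSet.empty ℝ (BorI ctblIdeal)
end

section
/- Assume the Continuum Hypothesis. Then there exists a partition P ⊆ [ℝ]^{≤ω} of ℝ into countable sets such that for every subfamily A ⊆ P, if ⋃A is [ℝ]^{≤ω}-nonmeasurable then ⋃A is completely [ℝ]^{≤ω}-nonmeasurable. -/
/-! Auxiliary material -/

section Aux
open Set

lemma CH_zero.{u_ch} (h : Cardinal.continuum.{u_ch} = Cardinal.aleph.{u_ch} 1) :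
    Cardinal.continuum.{0} = Cardinal.aleph.{0} 1 := by
  rw [← Cardinal.lift_inj.{0,u_ch}, Cardinal.lift_continuum, Cardinal.lift_aleph]
  simpa using h

lemma INonmeas_iff (A : Set ℝ) : INonmeasurable ctblIdeal A ↔ ¬ MeasurableSet A := by
  have h1 : {s : Set ℝ | MeasurableSet s ∨ s ∈ ctblIdeal} = {s : Set ℝ | MeasurableSet s} := by
    ext s
    simp only [ctblIdeal, mem_setOf_eq, or_iff_left_iff_imp]
    exact fun h => h.measurableSet
  have h2 : BorI ctblIdeal = (inferInstance : MeasurableSpace ℝ) := by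
    rw [BorI, h1, MeasurableSpace.generateFrom_measurableSet]
  rw [INonmeasurable, h2]

lemma uncountable_cantor : ¬ Countable (ℕ → Bool) := by
  intro h
  have h1 := Cardinal.mk_le_aleph0_iff.mpr h
  have h2 : (2 : Cardinal) ^ (Cardinal.aleph0) ≤ Cardinal.aleph0 := by
    rw [← Cardinal.mk_bool, ← Cardinal.mk_nat, Cardinal.power_def]
    simpa using h1
  exact absurd h2 (Cardinal.cantor _).not_ge

/-- Perfect set property: an uncountable Borel subset of ℝ contains an
uncountable closed subset. -/
lemma borel_contains_closed_unc {B : Set ℝ} (hB : MeasurableSet B) (hunc : ¬B.Countable) :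
    ∃ Q : Set ℝ, Q ⊆ B ∧ IsClosed Q ∧ ¬Q.Countable := by
  obtain ⟨t', hle, ht'polish, hclosed, -⟩ := hB.isClopenable
  obtain ⟨f, hrange, hcont, hinj⟩ :=
    @IsClosed.exists_nat_bool_injection_of_not_countable ℝ t' ht'polish B hclosed hunc
  have hcont' : @Continuous _ _ _ UniformSpace.toTopologicalSpace f :=
    continuous_le_rng hle hcont
  have hcomp : @IsCompact ℝ UniformSpace.toTopologicalSpace (range f) :=
    @isCompact_range _ _ _ UniformSpace.toTopologicalSpace _ f hcont'
  have hcl : @IsClosed ℝ UniformSpace.toTopologicalSpace (range f) :=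
    @IsCompact.isClosed _ UniformSpace.toTopologicalSpace (by infer_instance) _ hcomp
  refine ⟨Set.range f, hrange, hcl, ?_⟩
  intro hc
  have h2 := hc.to_subtype
  have : Countable (ℕ → Bool) :=
    Countable.of_equiv _ (Equiv.ofInjective f hinj).symm
  exact uncountable_cantor this

/-- Injection from uncountable closed subsets of ℝ into sequences. -/
lemma closed_inj : ∃ j : {C : Set ℝ // IsClosed C ∧ ¬C.Countable} → (ℕ → ℝ),
    Function.Injective j := by
  have key : ∀ C : {C : Set ℝ // IsClosed C ∧ ¬C.Countable},
      ∃ u : ℕ → ℝ, closure (Set.range u) = C.1 := by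
    rintro ⟨C, hC, hunc⟩
    have hne : C.Nonempty := by
      rcases C.eq_empty_or_nonempty with h | h
      · exact absurd (by simp [h]) hunc
      · exact h
    have : Nonempty C := hne.to_subtype
    obtain ⟨u, hu⟩ := TopologicalSpace.exists_dense_seq C
    refine ⟨fun n => (u n : ℝ), le_antisymm ?_ ?_⟩
    · apply hC.closure_subset_iff.mpr
      rintro - ⟨n, rfl⟩; exact (u n).2
    · intro x hx
      have h1 : (⟨x, hx⟩ : C) ∈ closure (Set.range u) := by
        rw [hu.closure_range]; trivial
      have h2 := image_closure_subset_closure_image (f := (Subtype.val : C → ℝ))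
        continuous_subtype_val (mem_image_of_mem _ h1)
      have : (Subtype.val : C → ℝ) '' Set.range u = Set.range fun n => (u n : ℝ) := by
        rw [← Set.range_comp]; rfl
      rwa [this] at h2
  choose j hj using key
  refine ⟨j, fun C C' h => ?_⟩
  apply Subtype.ext
  rw [← hj C, ← hj C', h]

/-- A "catalogue" of all uncountable closed subsets of ℝ indexed by ℝ. -/
lemma exists_q : ∃ q : ℝ → Set ℝ,
    (∀ x, IsClosed (q x) ∧ ¬(q x).Countable) ∧
    ∀ C : Set ℝ, IsClosed C → ¬C.Countable → ∃ x, q x = C := by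
  obtain ⟨j, hj⟩ := closed_inj
  have hcard : Cardinal.mk (ℕ → ℝ) = Cardinal.mk ℝ := by
    rw [Cardinal.mk_real, ← Cardinal.power_def, Cardinal.mk_real, Cardinal.mk_nat,
      Cardinal.continuum_power_aleph0]
  obtain ⟨e⟩ := Cardinal.eq.mp hcard
  set i : {C : Set ℝ // IsClosed C ∧ ¬C.Countable} → ℝ := fun C => e (j C) with hi
  have hinj : Function.Injective i := fun a b h => hj (e.injective h)
  classical
  refine ⟨fun x => if h : ∃ C, i C = x then (h.choose).1 else Set.univ, fun x => ?_, ?_⟩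
  · dsimp only
    split_ifs with h
    · exact h.choose.2
    · constructor
      · exact isClosed_univ
      · exact Cardinal.not_countable_real
  · intro C hC hunc
    refine ⟨i ⟨C, hC, hunc⟩, ?_⟩
    have h : ∃ C', i C' = i ⟨C, hC, hunc⟩ := ⟨_, rfl⟩
    simp only [dif_pos h]
    have := hinj h.choose_spec
    rw [this]

lemma seg_countable {r : ℝ → ℝ → Prop} (hCH : Cardinal.continuum.{0} = Cardinal.aleph.{0} 1)
    [wo : IsWellOrder ℝ r] (hr : (Cardinal.mk ℝ).ord = Ordinal.type r) (x : ℝ) :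
    {y : ℝ | r y x ∨ y = x}.Countable := by
  have h1 := Cardinal.card_typein_lt (r := r) x hr
  rw [Cardinal.mk_real, hCH, Ordinal.card_typein] at h1
  have h3 : {y : ℝ | r y x}.Countable :=
    (Cardinal.countable_iff_lt_aleph_one _).mpr h1
  have : {y : ℝ | r y x ∨ y = x} = {y : ℝ | r y x} ∪ {x} := by
    ext y; simp [Set.mem_union]; tauto
  rw [this]
  exact h3.union (Set.countable_singleton x)

lemma nonempty_diff_of_not_countable {S T : Set ℝ} (hS : ¬S.Countable) (hT : T.Countable) :
    (S \ T).Nonempty := by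
  rw [Set.nonempty_iff_ne_empty]
  intro h
  exact hS (hT.mono (Set.diff_eq_empty.mp h))

end Aux

noncomputable section Rec
open Set
open scoped Classical

variable (r : ℝ → ℝ → Prop) (q : ℝ → Set ℝ)

def avoidSet (x : ℝ) (f : ∀ γ, r γ x → ℝ → ℝ) : Set ℝ :=
  {z | (∃ γ, ∃ h : r γ x, ∃ δ, (r δ γ ∨ δ = γ) ∧ f γ h δ = z) ∨ (r z x ∨ z = x)}

lemma avoidSet_countable (hseg : ∀ x, {y : ℝ | r y x ∨ y = x}.Countable)
    (x : ℝ) (f : ∀ γ, r γ x → ℝ → ℝ) : (avoidSet r x f).Countable := by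
  rw [avoidSet, Set.setOf_or]
  apply Set.Countable.union
  · have hsub : {z | ∃ γ, ∃ h : r γ x, ∃ δ, (r δ γ ∨ δ = γ) ∧ f γ h δ = z} ⊆
        ⋃ (γ : {y : ℝ // r y x}), (f γ.1 γ.2) '' {δ | r δ γ.1 ∨ δ = γ.1} := by
      rintro z ⟨γ, h, δ, hδ, rfl⟩
      exact Set.mem_iUnion.mpr ⟨⟨γ, h⟩, Set.mem_image_of_mem _ hδ⟩
    have hcc : Countable {y : ℝ // r y x} := by
      have := ((hseg x).mono (fun y (hy : r y x) => Or.inl hy)).to_subtype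
      exact this
    exact Set.Countable.mono hsub
      (Set.countable_iUnion fun (γ : {y : ℝ // r y x}) => (hseg γ.1).image _)
  · exact hseg x

variable (wo : IsWellOrder ℝ r) (hseg : ∀ x, {y : ℝ | r y x ∨ y = x}.Countable)
  (hq : ∀ δ, ¬(q δ).Countable)

def chooseAux (x : ℝ) (ih : ∀ γ, r γ x → ℝ → ℝ) : ℝ → ℝ := fun δ =>
  if _h : r δ x ∨ δ = x then
    (nonempty_diff_of_not_countable (hq δ) (avoidSet_countable r hseg x ih)).some
  else 0

def chooseFn : ℝ → ℝ → ℝ :=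
  (@IsWellFounded.wf ℝ r wo.toIsWellFounded).fix (chooseAux r q hseg hq)

lemma chooseFn_eq (x : ℝ) : chooseFn r q wo hseg hq x
    = chooseAux r q hseg hq x (fun γ _ => chooseFn r q wo hseg hq γ) :=
  WellFounded.fix_eq _ _ x

lemma chooseFn_spec (x δ : ℝ) (h : r δ x ∨ δ = x) :
    chooseFn r q wo hseg hq x δ ∈
      q δ \ avoidSet r x (fun γ _ => chooseFn r q wo hseg hq γ) := by
  rw [chooseFn_eq, chooseAux, dif_pos h]
  exact Set.Nonempty.some_mem _

end Rec

section Inj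
variable {r : ℝ → ℝ → Prop}

lemma c_inj (c : ℝ → ℝ → ℝ) (wo : IsWellOrder ℝ r)
    (hnp : ∀ x δ, (r δ x ∨ δ = x) → ∀ γ, r γ x → ∀ δ', (r δ' γ ∨ δ' = γ) → c γ δ' ≠ c x δ)
    {x y δ δ' : ℝ} (hx : r δ x ∨ δ = x) (hy : r δ' y ∨ δ' = y) (hxy : x ≠ y) :
    c x δ ≠ c y δ' := by
  haveI := wo
  rcases trichotomous (r := r) x y with h | h | h
  · exact fun he => (hnp y δ' hy x h δ hx) he
  · exact absurd h hxy
  · exact fun he => (hnp x δ hx y h δ' hy) he.symm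

end Inj

theorem exists_partition_nonmeasurable_implies_completely_of_CH
    (hCH : Cardinal.continuum = Cardinal.aleph 1) :
    ∃ P : Set (Set ℝ), (∀ p ∈ P, p.Countable) ∧ IsPartitionOfReals P ∧
      ∀ A ⊆ P, INonmeasurable ctblIdeal (⋃₀ A) →
        CompletelyINonmeasurable ctblIdeal (⋃₀ A) := by
  classical
  have hCH0 := CH_zero hCH
  obtain ⟨q, hqprop, hqsurj⟩ := exists_q
  obtain ⟨r, wo, hr⟩ := Cardinal.ord_eq ℝ
  haveI := wo
  have hseg : ∀ x, {y : ℝ | r y x ∨ y = x}.Countable := fun x => seg_countable hCH0 hr x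
  have hq : ∀ δ, ¬(q δ).Countable := fun δ => (hqprop δ).2
  set c : ℝ → ℝ → ℝ := chooseFn r q wo hseg hq with hc
  have hspec := chooseFn_spec r q wo hseg hq
  have hmem : ∀ x δ, (r δ x ∨ δ = x) → c x δ ∈ q δ := fun x δ h => (hspec x δ h).1
  have hns : ∀ x δ, (r δ x ∨ δ = x) → ¬(r (c x δ) x ∨ c x δ = x) :=
    fun x δ h hz => (hspec x δ h).2 (Or.inr hz)
  have hnp : ∀ x δ, (r δ x ∨ δ = x) → ∀ γ, r γ x → ∀ δ', (r δ' γ ∨ δ' = γ) →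
      c γ δ' ≠ c x δ :=
    fun x δ h γ hγ δ' hδ' he => (hspec x δ h).2 (Or.inl ⟨γ, hγ, δ', hδ', he⟩)
  have hinj : ∀ {x y δ δ' : ℝ}, (r δ x ∨ δ = x) → (r δ' y ∨ δ' = y) → x ≠ y →
      c x δ ≠ c y δ' := fun hx hy hxy => c_inj c wo hnp hx hy hxy
  -- the partition
  set seg' : ℝ → Set ℝ := fun x => {y | r y x ∨ y = x} with hseg'
  set Hs : ℝ → Set ℝ := fun x => c x '' seg' x with hHs
  set cov : ℝ → Prop := fun x => ∃ γ, r γ x ∧ x ∈ Hs γ with hcov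
  set piece : ℝ → Set ℝ := fun x => Hs x ∪ {z | z = x ∧ ¬cov x} with hpiece
  -- basic facts about pieces
  have hctble : ∀ x, (piece x).Countable := by
    intro x
    apply Set.Countable.union ((hseg x).image _)
    exact (Set.countable_singleton x).mono (fun z hz => hz.1)
  have hne : ∀ x, (piece x).Nonempty :=
    fun x => ⟨c x x, Or.inl (Set.mem_image_of_mem _ (Or.inr rfl))⟩
  have hkey : ∀ x y : ℝ, x ≠ y → ∀ z, z ∈ Hs x → z ∈ piece y → False := by
    intro x y hxy z hzx hzy
    obtain ⟨δ, hδ, he⟩ := hzx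
    rcases hzy with hzy | ⟨hez, hncov⟩
    · obtain ⟨δ', hδ', he'⟩ := hzy
      exact hinj hδ hδ' hxy (he.trans he'.symm)
    · rcases trichotomous (r := r) x y with h | h | h
      · exact hncov ⟨x, h, ⟨δ, hδ, he.trans hez⟩⟩
      · exact hxy h
      · exact hns x δ hδ (Or.inl (by rw [he, hez]; exact h))
  have hdisj : ∀ x y : ℝ, x ≠ y → piece x ∩ piece y = ∅ := by
    intro x y hxy
    rw [Set.eq_empty_iff_forall_notMem]
    rintro z ⟨hzx, hzy⟩
    rcases hzx with hzx | ⟨hez, hncov⟩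
    · exact hkey x y hxy z hzx hzy
    · rcases hzy with hzy | ⟨hez', _⟩
      · exact hkey y x hxy.symm z hzy (Or.inr ⟨hez, hncov⟩)
      · exact hxy (hez.symm.trans hez')
  have hcover : ∀ z : ℝ, ∃ x, z ∈ piece x := by
    intro z
    by_cases h : cov z
    · obtain ⟨γ, hγ, hz⟩ := h
      exact ⟨γ, Or.inl hz⟩
    · exact ⟨z, Or.inr ⟨rfl, h⟩⟩
  have hmiss : ∀ β : ℝ, {p : Set ℝ | p ∈ Set.range piece ∧ p ∩ q β = ∅}.Countable := by
    intro β
    have hsub : {p : Set ℝ | p ∈ Set.range piece ∧ p ∩ q β = ∅} ⊆ piece '' (seg' β) := by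
      rintro p ⟨⟨x, rfl⟩, hp⟩
      refine ⟨x, ?_, rfl⟩
      rcases trichotomous (r := r) β x with h | h | h
      · exfalso
        have : c x β ∈ piece x ∩ q β :=
          ⟨Or.inl (Set.mem_image_of_mem _ (Or.inl h)), hmem x β (Or.inl h)⟩
        rw [hp] at this
        exact this
      · exfalso
        have : c x β ∈ piece x ∩ q β :=
          ⟨Or.inl (Set.mem_image_of_mem _ (Or.inr h)), hmem x β (Or.inr h)⟩
        rw [hp] at this
        exact this
      · exact Or.inl h
    exact ((hseg β).image piece).mono hsub
  -- package the partition
  refine ⟨Set.range piece, ?_, ⟨?_, ?_, ?_⟩, ?_⟩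
  · rintro p ⟨x, rfl⟩; exact hctble x
  · rintro p ⟨x, rfl⟩; exact Set.Nonempty.ne_empty (hne x)
  · rw [Set.eq_univ_iff_forall]
    intro z
    obtain ⟨x, hx⟩ := hcover z
    exact ⟨piece x, ⟨x, rfl⟩, hx⟩
  · rintro p ⟨x, rfl⟩ p' ⟨y, rfl⟩ hne'
    have hxy : x ≠ y := fun h => hne' (by rw [h])
    exact hdisj x y hxy
  -- the main nonmeasurability statement
  · intro A hA hnm
    rw [INonmeas_iff] at hnm
    have hAunc : ¬A.Countable := by
      intro h
      exact hnm ((h.sUnion (fun p hp => by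
        obtain ⟨x, rfl⟩ := hA hp; exact hctble x)).measurableSet)
    have hcompl : ⋃₀ (Set.range piece \ A) = (⋃₀ A)ᶜ := by
      ext z
      constructor
      · rintro ⟨p, ⟨hpP, hpA⟩, hzp⟩ ⟨p', hp'A, hzp'⟩
        have hne2 : p ≠ p' := fun h => hpA (h ▸ hp'A)
        obtain ⟨x, rfl⟩ := hpP
        obtain ⟨y, rfl⟩ := hA hp'A
        have hxy : x ≠ y := fun h => hne2 (by rw [h])
        have := hdisj x y hxy
        rw [Set.eq_empty_iff_forall_notMem] at this
        exact this z ⟨hzp, hzp'⟩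
      · intro hz
        obtain ⟨x, hx⟩ := hcover z
        by_cases hxA : piece x ∈ A
        · exact absurd ⟨piece x, hxA, hx⟩ hz
        · exact ⟨piece x, ⟨⟨x, rfl⟩, hxA⟩, hx⟩
    have hPAunc : ¬(Set.range piece \ A).Countable := by
      intro h
      apply hnm
      have : (⋃₀ (Set.range piece \ A)).Countable :=
        h.sUnion (fun p hp => by obtain ⟨x, rfl⟩ := hp.1; exact hctble x)
      have h2 : MeasurableSet ((⋃₀ (Set.range piece \ A))ᶜ) := this.measurableSet.compl
      rwa [hcompl, compl_compl] at h2
    have hmeet : ∀ T, T ⊆ Set.range piece → ¬T.Countable →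
        ∀ C : Set ℝ, IsClosed C → ¬C.Countable → (⋃₀ T ∩ C).Nonempty := by
      intro T hT hTunc C hCcl hCunc
      obtain ⟨β, rfl⟩ := hqsurj C hCcl hCunc
      rw [Set.nonempty_iff_ne_empty]
      intro hempty
      apply hTunc
      apply (hmiss β).mono
      intro p hp
      refine ⟨hT hp, ?_⟩
      rw [Set.eq_empty_iff_forall_notMem] at hempty ⊢
      rintro z ⟨hzp, hzC⟩
      exact hempty z ⟨⟨p, hp, hzp⟩, hzC⟩
    intro B hBmeas hBI
    have hBunc : ¬B.Countable := hBI
    rw [INonmeas_iff]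
    intro hSB
    by_cases hcase : (⋃₀ A ∩ B).Countable
    · have hD : MeasurableSet (B \ (⋃₀ A ∩ B)) := hBmeas.diff hSB
      have hDunc : ¬(B \ (⋃₀ A ∩ B)).Countable := by
        intro h
        exact hBunc (((h.union hcase)).mono (fun z hz => by
          by_cases hzS : z ∈ ⋃₀ A ∩ B
          · exact Or.inr hzS
          · exact Or.inl ⟨hz, hzS⟩))
      obtain ⟨Q, hQB, hQcl, hQunc⟩ := borel_contains_closed_unc hD hDunc
      obtain ⟨z, hzS, hzQ⟩ := hmeet A hA hAunc Q hQcl hQunc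
      have := hQB hzQ
      exact this.2 ⟨hzS, this.1⟩
    · obtain ⟨Q, hQS, hQcl, hQunc⟩ := borel_contains_closed_unc hSB hcase
      obtain ⟨z, hz1, hz2⟩ := hmeet (Set.range piece \ A) Set.diff_subset hPAunc Q hQcl hQunc
      have hzc : z ∈ (⋃₀ A)ᶜ := by rw [← hcompl]; exact hz1
      exact hzc (hQS hz2).1
end
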